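/- arXiv:1811.01149 — 3 statements merged into one kernel-verified Lean document; each statement's English description precedes it below -/
import Mathlib

section
/- Suppose u, p : [θmin, θmax] → ℝ are differentiable with u'(θ) ≥ 0 and p'(θ) = θ·u'(θ) for all θ in the interval. Then the contract is incentive compatible: for all θ, θ' ∈ [θmin, θmax], θ·u(θ) − p(θ) ≥ θ·u(θ') − p(θ'). -/
/-!
For a fixed type θ, the surplus `x ↦ θ * u x - p x` from reporting `x` has derivative
`θ * u' x - x * u' x = (θ - x) * u' x`, which is `≥ 0` left of `θ` and `≤ 0` right of it.
By the first-derivative test, truthful reporting `x = θ` maximizes the surplus.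
-/

open Set

section DerivSign

variable {f f' : ℝ → ℝ} {a b c : ℝ}

theorem monotoneOn_Icc_of_hasDerivAt_nonneg (hf : ∀ x ∈ Icc a b, HasDerivAt f (f' x) x)
    (hf' : ∀ x ∈ Icc a b, 0 ≤ f' x) : MonotoneOn f (Icc a b) :=
  monotoneOn_of_hasDerivWithinAt_nonneg (convex_Icc a b)
    (fun x hx => (hf x hx).continuousAt.continuousWithinAt)
    (fun x hx => (hf x (interior_subset hx)).hasDerivWithinAt)
    (fun x hx => hf' x (interior_subset hx))

theorem antitoneOn_Icc_of_hasDerivAt_nonpos (hf : ∀ x ∈ Icc a b, HasDerivAt f (f' x) x)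
    (hf' : ∀ x ∈ Icc a b, f' x ≤ 0) : AntitoneOn f (Icc a b) :=
  antitoneOn_of_hasDerivWithinAt_nonpos (convex_Icc a b)
    (fun x hx => (hf x hx).continuousAt.continuousWithinAt)
    (fun x hx => (hf x (interior_subset hx)).hasDerivWithinAt)
    (fun x hx => hf' x (interior_subset hx))

theorem isMaxOn_Icc_of_hasDerivAt_sign_change (hc : c ∈ Icc a b)
    (hf : ∀ x ∈ Icc a b, HasDerivAt f (f' x) x)
    (hleft : ∀ x ∈ Icc a c, 0 ≤ f' x) (hright : ∀ x ∈ Icc c b, f' x ≤ 0) :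
    IsMaxOn f (Icc a b) c := by
  intro x hx
  rcases le_total x c with hxc | hcx
  · have hmono := monotoneOn_Icc_of_hasDerivAt_nonneg
      (fun y hy => hf y ⟨hy.1, hy.2.trans hc.2⟩) hleft
    exact hmono ⟨hx.1, hxc⟩ ⟨hc.1, le_rfl⟩ hxc
  · have hanti := antitoneOn_Icc_of_hasDerivAt_nonpos
      (fun y hy => hf y ⟨hc.1.trans hy.1, hy.2⟩) hright
    exact hanti ⟨le_rfl, hc.2⟩ ⟨hcx, hx.2⟩ hcx

end DerivSign

theorem feasible_contract_ic (θmin θmax : ℝ) (u p u' p' : ℝ → ℝ)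
    (hu : ∀ x ∈ Set.Icc θmin θmax, HasDerivAt u (u' x) x)
    (hp : ∀ x ∈ Set.Icc θmin θmax, HasDerivAt p (p' x) x)
    (hu' : ∀ x ∈ Set.Icc θmin θmax, 0 ≤ u' x)
    (hc : ∀ x ∈ Set.Icc θmin θmax, p' x = x * u' x) :
    ∀ θ ∈ Set.Icc θmin θmax, ∀ θ' ∈ Set.Icc θmin θmax,
      θ * u θ - p θ ≥ θ * u θ' - p θ' := by
  intro θ hθ θ' hθ'
  have hsurplus : ∀ x ∈ Icc θmin θmax,
      HasDerivAt (fun y => θ * u y - p y) ((θ - x) * u' x) x := by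
    intro x hx
    have hderiv := ((hu x hx).const_mul θ).sub (hp x hx)
    rwa [hc x hx, ← sub_mul] at hderiv
  refine isMaxOn_Icc_of_hasDerivAt_sign_change hθ hsurplus (fun x hx => ?_) (fun x hx => ?_) hθ'
  · exact mul_nonneg (sub_nonneg.2 hx.2) (hu' x ⟨hx.1, hx.2.trans hθ.2⟩)
  · exact mul_nonpos_of_nonpos_of_nonneg (sub_nonpos.2 hx.1) (hu' x ⟨hθ.1.trans hx.1, hx.2⟩)
end

section
/- If u, p : [θmin, θmax] → ℝ satisfy incentive compatibility and u is differentiable at an interior point θ with u'(θ) ≠ 0 and p is differentiable at θ, then p'(θ) = θ·u'(θ). -/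
theorem isLocalMax_misreport_payoff_of_IC {θmin θmax θ : ℝ} {u p : ℝ → ℝ}
    (hIC : ∀ a ∈ Set.Icc θmin θmax, ∀ b ∈ Set.Icc θmin θmax, a * u a - p a ≥ a * u b - p b)
    (hθ : θ ∈ Set.Ioo θmin θmax) :
    IsLocalMax (fun b => θ * u b - p b) θ :=
  IsMaxOn.isLocalMax (fun b hb => hIC θ (Set.Ioo_subset_Icc_self hθ) b hb)
    (Icc_mem_nhds hθ.1 hθ.2)

theorem ic_implies_deriv_condition_general (θmin θmax θ u' p' : ℝ) (u p : ℝ → ℝ)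
    (hIC : ∀ a ∈ Set.Icc θmin θmax, ∀ b ∈ Set.Icc θmin θmax,
      a * u a - p a ≥ a * u b - p b)
    (hθ : θ ∈ Set.Ioo θmin θmax)
    (hu : HasDerivAt u u' θ)
    (hp : HasDerivAt p p' θ) :
    p' = θ * u' := by
  have hfoc : θ * u' - p' = 0 :=
    (isLocalMax_misreport_payoff_of_IC hIC hθ).hasDerivAt_eq_zero ((hu.const_mul θ).sub hp)
  linarith

theorem ic_implies_deriv_condition (θmin θmax θ u' p' : ℝ) (u p : ℝ → ℝ)
    (hIC : ∀ a ∈ Set.Icc θmin θmax, ∀ b ∈ Set.Icc θmin θmax,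
      a * u a - p a ≥ a * u b - p b)
    (hθ : θ ∈ Set.Ioo θmin θmax)
    (hu : HasDerivAt u u' θ) (hu' : u' ≠ 0)
    (hp : HasDerivAt p p' θ) :
    p' = θ * u' :=
  ic_implies_deriv_condition_general θmin θmax θ u' p' u p hIC hθ hu hp
end

section
/- Suppose u, p : [θmin, θmax] → ℝ are differentiable with p'(x) = x·u'(x) and u'(x) ≥ 0 for all x, and θmin·u(θmin) − p(θmin) − M ≥ 0. Then for θ > θmin, θ·u(θ) − p(θ) − M ≥ (θ − θmin)·u(θmin); in particular if u(θmin) ≥ 0 the UAV utility is nonnegative for all types. -/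
/-!
The surplus `V x = x * u x - p x` satisfies the envelope identity `V' = u`, because
`p' = x u'` cancels the `x u'` term of `(x u)'`. Since `u' ≥ 0`, `V'` is monotone, so `V` lies
above its tangent line at `θmin`: `V θ ≥ V θmin + (θ - θmin) u θmin`, and `V θmin ≥ M`.
-/

open Set

lemma monotoneOn_Icc_of_hasDerivAt {a b : ℝ} {f f' : ℝ → ℝ}
    (hf : ∀ x ∈ Icc a b, HasDerivAt f (f' x) x) (hf' : ∀ x ∈ Ioo a b, 0 ≤ f' x) :
    MonotoneOn f (Icc a b) := by
  refine monotoneOn_of_hasDerivWithinAt_nonneg (f' := f') (convex_Icc a b)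
    (fun x hx => (hf x hx).continuousAt.continuousWithinAt) (fun x hx => ?_) ?_
  · rw [interior_Icc] at hx
    exact (hf x (Ioo_subset_Icc_self hx)).hasDerivWithinAt
  · rwa [interior_Icc]

lemma hasDerivAt_mul_sub_of_hasDerivAt_eq_mul {u p : ℝ → ℝ} {x d : ℝ}
    (hu : HasDerivAt u d x) (hp : HasDerivAt p (x * d) x) :
    HasDerivAt (fun y => y * u y - p y) (u x) x :=
  (((hasDerivAt_id' x).mul hu).sub hp).congr_deriv (by ring)

lemma add_sub_mul_le_of_hasDerivAt_of_monotoneOn {a b : ℝ} {V v : ℝ → ℝ} (hab : a ≤ b)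
    (hV : ∀ x ∈ Icc a b, HasDerivAt V (v x) x) (hv : MonotoneOn v (Icc a b)) :
    V a + (b - a) * v a ≤ V b := by
  have hg : ∀ x ∈ Icc a b, HasDerivAt (fun y => V y - y * v a) (v x - v a) x := fun x hx =>
    (hV x hx).sub (hasDerivAt_mul_const (v a))
  have hmono := monotoneOn_Icc_of_hasDerivAt hg fun x hx =>
    sub_nonneg.2 (hv (left_mem_Icc.2 hab) (Ioo_subset_Icc_self hx) hx.1.le)
  have hgab := hmono (left_mem_Icc.2 hab) (right_mem_Icc.2 hab) hab
  dsimp only at hgab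
  linarith

theorem ir_key_inequality (θmin θmax M : ℝ) (u p u' p' : ℝ → ℝ)
    (hu : ∀ x ∈ Set.Icc θmin θmax, HasDerivAt u (u' x) x)
    (hp : ∀ x ∈ Set.Icc θmin θmax, HasDerivAt p (p' x) x)
    (hu' : ∀ x ∈ Set.Icc θmin θmax, 0 ≤ u' x)
    (hc : ∀ x ∈ Set.Icc θmin θmax, p' x = x * u' x)
    (hIRmin : θmin * u θmin - p θmin - M ≥ 0) :
    ∀ θ ∈ Set.Icc θmin θmax, θ > θmin →
      θ * u θ - p θ - M ≥ (θ - θmin) * u θmin ∧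
      (0 ≤ u θmin → θ * u θ - p θ - M ≥ 0) := by
  intro θ hθ hgt
  have hsub : Icc θmin θ ⊆ Icc θmin θmax := Icc_subset_Icc le_rfl hθ.2
  have hV : ∀ x ∈ Icc θmin θ, HasDerivAt (fun y => y * u y - p y) (u x) x := fun x hx =>
    hasDerivAt_mul_sub_of_hasDerivAt_eq_mul (hu x (hsub hx)) (hc x (hsub hx) ▸ hp x (hsub hx))
  have hmono : MonotoneOn u (Icc θmin θ) :=
    monotoneOn_Icc_of_hasDerivAt (fun x hx => hu x (hsub hx))
      fun x hx => hu' x (hsub (Ioo_subset_Icc_self hx))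
  have tangent := add_sub_mul_le_of_hasDerivAt_of_monotoneOn hgt.le hV hmono
  refine ⟨by linarith, fun h0 => ?_⟩
  linarith [mul_nonneg (sub_nonneg.2 hgt.le) h0]
end
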